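/- Let the observed data be any (X_i, Y_i)_{i=1}^n ⊂ ℝ^p × {0,1} and let the synthetic data-generating distribution (X*, Y*) satisfy Condition 1 with constants B₁ and q. Assume Condition 5: τ ≥ c_*·p for some constant c_* > 0; assume also p > ω_*·n for some constant ω_* > 0, and set C_* := 1 + 1/(c_*ω_*), so that (n + τ)/τ ≤ C_*. Then there exist positive constants η₀, ν depending only on B₁ and q such that every maximizer β̂_∞ of the population-catalytic-prior objective satisfies ‖β̂_∞‖₂ ≤ C_* log(2) / (η₀ν). -/

import Mathlib

/-!
Write `t = ⟨X*, b⟩` for a maximizer `b`. Comparing the objective at `b` with its value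
`-(n + τ) log 2` at `0`, and using that every data term `Yᵢ tᵢ - ρ(tᵢ)` is `≤ 0`, gives
`-E[Y* t - ρ(t)] ≤ ((n + τ)/τ) log 2 ≤ C⋆ log 2`. Conditioning on `X*` replaces `Y*` by
`w = P(Y* = 1 ∣ X*) ∈ [q, 1 - q]`, and `ρ(t) - w t ≥ q |t|` for such `w`; hence
`q E|t| ≤ C⋆ log 2`.

It remains to see `E|t| ≥ ‖b‖ / (4 √(B₁² + 3))`. Split `t = b₁ + S` with
`S = ∑_{j ≥ 2} bⱼ X*ⱼ`. The intercept is `|b₁| = |E t| ≤ E|t|`. The sum `S` of independent,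
centered, bounded terms has `E S² = ∑_{j ≥ 2} bⱼ²` and `E S⁴ ≤ (B₁² + 3) (E S²)²`, and this
fourth-moment bound forces `√(E S²) ≤ √(B₁² + 3) E|S|` (Hölder between the first, second and
fourth moments). So `η₀ = q` and `ν = 1 / (4 √(B₁² + 3))`.
-/

open MeasureTheory ProbabilityTheory
open scoped RealInnerProductSpace BigOperators ENNReal

/-- The logistic log-partition function `ρ(t) = log(1 + eᵗ)`. -/
noncomputable def rho (t : ℝ) : ℝ := Real.log (1 + Real.exp t)

/-- The logistic (sigmoid) function `ρ'(t) = eᵗ/(1 + eᵗ)`. -/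
noncomputable def rho' (t : ℝ) : ℝ := Real.exp t / (1 + Real.exp t)

/-- `ρ''(t) = ρ'(t)(1 − ρ'(t))`. -/
noncomputable def rho'' (t : ℝ) : ℝ := rho' t * (1 - rho' t)

/-- **Condition 1** of the paper, on the synthetic data-generating distribution of a
pair `(X*, Y*)`: the first coordinate of `X*` is `1`; the remaining coordinates are
independent, centered, of unit variance, and bounded by `B₁`; `Y*` is `{0,1}`-valued
and `q ≤ P(Y* = 1 ∣ X*) ≤ 1 − q` (expressed via the conditional expectation of the
indicator of `{Y* = 1}` given `σ(X*)`). -/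
def Condition1 {Ω : Type*} [MeasurableSpace Ω] (μ : Measure Ω) {p : ℕ}
    (Xstar : Ω → EuclideanSpace ℝ (Fin p)) (Ystar : Ω → ℝ) (B₁ q : ℝ) : Prop :=
  (∀ j : Fin p, (j : ℕ) = 0 → ∀ᵐ ω ∂μ, Xstar ω j = 1) ∧
  (∀ j : Fin p, (j : ℕ) ≠ 0 →
    (∫ ω, Xstar ω j ∂μ) = 0 ∧ variance (fun ω => Xstar ω j) μ = 1 ∧
      (∀ᵐ ω ∂μ, |Xstar ω j| ≤ B₁)) ∧
  iIndepFun
    (fun (j : {j : Fin p // (j : ℕ) ≠ 0}) ω => Xstar ω j.1) μ ∧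
  (∀ᵐ ω ∂μ, Ystar ω = 0 ∨ Ystar ω = 1) ∧
  (∀ᵐ ω ∂μ,
    q ≤ (μ[(fun ω' => if Ystar ω' = 1 then (1 : ℝ) else 0) |
          MeasurableSpace.comap Xstar inferInstance]) ω ∧
    (μ[(fun ω' => if Ystar ω' = 1 then (1 : ℝ) else 0) |
          MeasurableSpace.comap Xstar inferInstance]) ω ≤ 1 - q)

universe u

/-- The population catalytic-prior objective (to be maximized). -/
noncomputable def popObj {Ω : Type*} [MeasurableSpace Ω] (μ : Measure Ω) {n p : ℕ}
    (τ : ℝ) (X : Fin n → EuclideanSpace ℝ (Fin p)) (Y : Fin n → ℝ)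
    (Xstar : Ω → EuclideanSpace ℝ (Fin p)) (Ystar : Ω → ℝ)
    (β : EuclideanSpace ℝ (Fin p)) : ℝ :=
  (∑ i, (Y i * ⟪X i, β⟫ - rho ⟪X i, β⟫)) +
    τ * ∫ ω, (Ystar ω * ⟪Xstar ω, β⟫ - rho ⟪Xstar ω, β⟫) ∂μ

theorem rho_nonneg (t : ℝ) : 0 ≤ rho t :=
  Real.log_nonneg (by linarith [Real.exp_pos t])

theorem le_rho (t : ℝ) : t ≤ rho t := by
  simpa [Real.log_exp, rho] using
    Real.log_le_log (Real.exp_pos t) (by linarith [Real.exp_pos t] : Real.exp t ≤ 1 + Real.exp t)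

theorem rho_zero : rho 0 = Real.log 2 := by norm_num [rho]

theorem rho_mono : Monotone rho := fun _ _ hab =>
  Real.log_le_log (by positivity) (by gcongr)

theorem continuous_rho : Continuous rho :=
  (continuous_const.add Real.continuous_exp).log fun t => (by positivity : 0 < 1 + Real.exp t).ne'

theorem mul_sub_rho_nonpos {y : ℝ} (hy : y = 0 ∨ y = 1) (t : ℝ) : y * t - rho t ≤ 0 := by
  rcases hy with rfl | rfl <;> simp [rho_nonneg, le_rho]

theorem mul_abs_le_rho_sub_mul {q w : ℝ} (hqw : q ≤ w) (hwq : w ≤ 1 - q) (t : ℝ) :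
    q * |t| ≤ rho t - w * t := by
  rcases le_or_gt 0 t with ht | ht
  · rw [abs_of_nonneg ht]; nlinarith [le_rho t]
  · rw [abs_of_neg ht]; nlinarith [rho_nonneg t]

/-- Young's inequality `xy ≤ (2/3) x^{3/2} + (1/3) y³` at `x = (l |u|)^{2/3}`, `y = |u|^{4/3}`. -/
theorem sq_le_mul_abs_add_pow_four_div {l : ℝ} (hl : 0 < l) (u : ℝ) :
    u ^ 2 ≤ 2 / 3 * l * |u| + u ^ 4 / (3 * l ^ 2) := by
  rw [← sq_abs u, ← Even.pow_abs ⟨2, rfl⟩ u]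
  have h : 2 / 3 * l * |u| + |u| ^ 4 / (3 * l ^ 2) - |u| ^ 2
      = |u| * ((|u| - l) ^ 2 * (|u| + 2 * l)) / (3 * l ^ 2) := by
    field_simp; ring
  have : 0 ≤ |u| * ((|u| - l) ^ 2 * (|u| + 2 * l)) / (3 * l ^ 2) := by positivity
  linarith

theorem integral_mul_condExp {Ω : Type*} {m m₀ : MeasurableSpace Ω} {μ : Measure[m₀] Ω}
    (hm : m ≤ m₀) [SigmaFinite (μ.trim hm)] {f g : Ω → ℝ} (hf : StronglyMeasurable[m] f)
    (hfg : Integrable (f * g) μ) (hg : Integrable g μ) :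
    ∫ ω, f ω * (μ[g | m]) ω ∂μ = ∫ ω, f ω * g ω ∂μ :=
  calc ∫ ω, f ω * (μ[g | m]) ω ∂μ = ∫ ω, (μ[f * g | m]) ω ∂μ :=
        integral_congr_ae (condExp_mul_of_stronglyMeasurable_left hf hfg hg).symm
    _ = ∫ ω, f ω * g ω ∂μ := integral_condExp hm

section Moments

variable {Ω : Type*} [MeasurableSpace Ω] {μ : Measure Ω}

theorem integrable_pow_of_ae_abs_le [IsFiniteMeasure μ] {f : Ω → ℝ} (hf : Measurable f) {C : ℝ}
    (hC : ∀ᵐ ω ∂μ, |f ω| ≤ C) (k : ℕ) : Integrable (fun ω => f ω ^ k) μ :=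
  .of_bound (hf.pow_const k).aestronglyMeasurable (C ^ k) <| by
    filter_upwards [hC] with ω hω
    simpa [abs_pow] using pow_le_pow_left₀ (abs_nonneg _) hω k

/-- Integrate `sq_le_mul_abs_add_pow_four_div` with `l = √(L ∫ S²)`. -/
theorem sqrt_integral_sq_le_of_integral_pow_four_le {S : Ω → ℝ}
    (h1 : Integrable (fun ω => |S ω|) μ) (h2 : Integrable (fun ω => S ω ^ 2) μ)
    (h4 : Integrable (fun ω => S ω ^ 4) μ) {L : ℝ} (hL : 0 < L)
    (hS4 : ∫ ω, S ω ^ 4 ∂μ ≤ L * (∫ ω, S ω ^ 2 ∂μ) ^ 2) :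
    √(∫ ω, S ω ^ 2 ∂μ) ≤ √L * ∫ ω, |S ω| ∂μ := by
  set s := ∫ ω, S ω ^ 2 ∂μ
  have hs : 0 ≤ s := integral_nonneg fun ω => sq_nonneg _
  rcases hs.eq_or_lt with hs0 | hs0
  · rw [← hs0, Real.sqrt_zero]
    exact mul_nonneg (Real.sqrt_nonneg _) (integral_nonneg fun ω => abs_nonneg _)
  set l := √(L * s)
  have hl : 0 < l := Real.sqrt_pos.2 (mul_pos hL hs0)
  have hint : s ≤ ∫ ω, (2 / 3 * l * |S ω| + S ω ^ 4 / (3 * l ^ 2)) ∂μ :=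
    integral_mono h2 ((h1.const_mul _).add (h4.div_const _)) fun ω =>
      sq_le_mul_abs_add_pow_four_div hl (S ω)
  rw [integral_add (h1.const_mul _) (h4.div_const _), integral_const_mul, integral_div] at hint
  have h4s : (∫ ω, S ω ^ 4 ∂μ) / (3 * l ^ 2) ≤ s / 3 := by
    rw [div_le_iff₀ (by positivity), Real.sq_sqrt (mul_nonneg hL.le hs)]
    nlinarith
  have hsl : √s * √s ≤ √s * (√L * ∫ ω, |S ω| ∂μ) := by
    rw [Real.mul_self_sqrt hs]
    have : l = √L * √s := Real.sqrt_mul hL.le s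
    nlinarith
  exact le_of_mul_le_mul_left hsl (Real.sqrt_pos.2 hs0)

end Moments

namespace ProbabilityTheory.IndepFun

variable {Ω : Type*} [MeasurableSpace Ω] {μ : Measure Ω} [IsProbabilityMeasure μ]
  {S T : Ω → ℝ} {a c : ℝ} (hST : IndepFun S T μ) (hS : Measurable S) (hT : Measurable T)
  (hSa : ∀ᵐ ω ∂μ, |S ω| ≤ a) (hTc : ∀ᵐ ω ∂μ, |T ω| ≤ c)
include hST hS hT hSa hTc

theorem integral_add_pow (n : ℕ) :
    ∫ ω, (S ω + T ω) ^ n ∂μ =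
      ∑ k ∈ Finset.range (n + 1), (∫ ω, S ω ^ k ∂μ) * (∫ ω, T ω ^ (n - k) ∂μ) * n.choose k := by
  have hpow (k l : ℕ) : IndepFun (fun ω => S ω ^ k) (fun ω => T ω ^ l) μ :=
    hST.comp (measurable_id.pow_const k) (measurable_id.pow_const l)
  simp_rw [add_pow]
  rw [integral_finsetSum]
  · refine Finset.sum_congr rfl fun k _ => ?_
    rw [integral_mul_const]
    exact congrArg (· * _) ((hpow k (n - k)).integral_mul_eq_mul_integral
      (hS.pow_const k).aestronglyMeasurable (hT.pow_const _).aestronglyMeasurable)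
  · exact fun k _ => ((hpow k (n - k)).integrable_mul (integrable_pow_of_ae_abs_le hS hSa k)
      (integrable_pow_of_ae_abs_le hT hTc _)).mul_const _

variable (hS0 : ∫ ω, S ω ∂μ = 0) (hT0 : ∫ ω, T ω ∂μ = 0)
include hS0 hT0

theorem integral_add_sq :
    ∫ ω, (S ω + T ω) ^ 2 ∂μ = ∫ ω, S ω ^ 2 ∂μ + ∫ ω, T ω ^ 2 ∂μ := by
  rw [hST.integral_add_pow hS hT hSa hTc]
  simp [Finset.sum_range_succ, hS0, hT0, add_comm]

theorem integral_add_pow_four :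
    ∫ ω, (S ω + T ω) ^ 4 ∂μ =
      ∫ ω, S ω ^ 4 ∂μ + 6 * (∫ ω, S ω ^ 2 ∂μ) * (∫ ω, T ω ^ 2 ∂μ) + ∫ ω, T ω ^ 4 ∂μ := by
  rw [hST.integral_add_pow hS hT hSa hTc]
  simp only [Nat.reduceAdd, Finset.sum_range_succ, Finset.range_one, Finset.sum_singleton,
    pow_zero, integral_const, probReal_univ, smul_eq_mul, mul_one, tsub_zero, one_mul, Nat.choose,
    Nat.cast_one, pow_one, hS0, Nat.add_one_sub_one, zero_mul, add_zero, Nat.cast_ofNat,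
    Nat.reduceSub, hT0, mul_zero, tsub_self]
  ring

end ProbabilityTheory.IndepFun

section IndependentSums

variable {Ω ι : Type*} [MeasurableSpace Ω] {μ : Measure Ω} {T : ι → Ω → ℝ} {C : ℝ}

theorem ae_abs_finset_sum_le (hT : ∀ j, ∀ᵐ ω ∂μ, |T j ω| ≤ C) (A : Finset ι) :
    ∀ᵐ ω ∂μ, |∑ j ∈ A, T j ω| ≤ A.card * C := by
  filter_upwards [(Filter.eventually_all_finset A).2 fun j _ => hT j] with ω hω
  calc |∑ j ∈ A, T j ω| ≤ ∑ j ∈ A, |T j ω| := Finset.abs_sum_le_sum_abs _ _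
    _ ≤ ∑ _j ∈ A, C := Finset.sum_le_sum hω
    _ = A.card * C := by rw [Finset.sum_const, nsmul_eq_mul]

theorem integral_finset_sum_eq_zero [IsFiniteMeasure μ] (hmeas : ∀ j, Measurable (T j))
    (hT : ∀ j, ∀ᵐ ω ∂μ, |T j ω| ≤ C) (hmean : ∀ j, ∫ ω, T j ω ∂μ = 0) (A : Finset ι) :
    ∫ ω, ∑ j ∈ A, T j ω ∂μ = 0 := by
  rw [integral_finsetSum A fun j _ => .of_bound (hmeas j).aestronglyMeasurable C (hT j)]
  exact Finset.sum_eq_zero fun j _ => hmean j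

variable [IsProbabilityMeasure μ] [DecidableEq ι] (hind : iIndepFun T μ)
  (hmeas : ∀ j, Measurable (T j)) (hT : ∀ j, ∀ᵐ ω ∂μ, |T j ω| ≤ C)
  (hmean : ∀ j, ∫ ω, T j ω ∂μ = 0)
include hind hmeas hT hmean

theorem ProbabilityTheory.iIndepFun.integral_sum_sq (A : Finset ι) :
    ∫ ω, (∑ j ∈ A, T j ω) ^ 2 ∂μ = ∑ j ∈ A, ∫ ω, T j ω ^ 2 ∂μ := by
  induction A using Finset.induction_on with
  | empty => simp
  | insert a s ha ih =>
    have hindep := (hind.indepFun_finsetSum_of_notMem hmeas ha).symm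
    rw [Finset.sum_fn] at hindep
    simp_rw [Finset.sum_insert ha]
    rw [hindep.integral_add_sq (hmeas a) (Finset.measurable_sum s fun j _ => hmeas j) (hT a)
      (ae_abs_finset_sum_le hT s) (hmean a) (integral_finset_sum_eq_zero hmeas hT hmean s), ih]

theorem ProbabilityTheory.iIndepFun.integral_sum_pow_four_le (A : Finset ι) :
    ∫ ω, (∑ j ∈ A, T j ω) ^ 4 ∂μ ≤
      ∑ j ∈ A, ∫ ω, T j ω ^ 4 ∂μ + 3 * (∑ j ∈ A, ∫ ω, T j ω ^ 2 ∂μ) ^ 2 := by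
  induction A using Finset.induction_on with
  | empty => simp
  | insert a s ha ih =>
    have hindep := (hind.indepFun_finsetSum_of_notMem hmeas ha).symm
    rw [Finset.sum_fn] at hindep
    simp_rw [Finset.sum_insert ha]
    rw [hindep.integral_add_pow_four (hmeas a) (Finset.measurable_sum s fun j _ => hmeas j)
      (hT a) (ae_abs_finset_sum_le hT s) (hmean a) (integral_finset_sum_eq_zero hmeas hT hmean s),
      hind.integral_sum_sq hmeas hT hmean s]
    have : 0 ≤ ∫ ω, T a ω ^ 2 ∂μ := integral_nonneg fun ω => sq_nonneg _
    nlinarith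

end IndependentSums

/-- Indices of the coordinates of `X*` other than the intercept `X*₁ ≡ 1`, which is coordinate
`0` here. -/
abbrev NonconstCoord (p : ℕ) : Type := {j : Fin p // (j : ℕ) ≠ 0}

theorem sum_eq_add_sum_nonconstCoord {p : ℕ} (f : Fin p → ℝ) {j₀ : Fin p} (hj₀ : (j₀ : ℕ) = 0) :
    ∑ j, f j = f j₀ + ∑ j : NonconstCoord p, f j := by
  rw [← Finset.add_sum_erase _ _ (Finset.mem_univ j₀), Finset.sum_subtype]
  simp [Fin.ext_iff, hj₀]

theorem real_inner_eq_sum {p : ℕ} (x b : EuclideanSpace ℝ (Fin p)) :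
    ⟪x, b⟫ = ∑ j, b j * x j := by
  simp [PiLp.inner_apply]

theorem norm_le_abs_add_sqrt_sum_sq {p : ℕ} (b : EuclideanSpace ℝ (Fin p)) {j₀ : Fin p}
    (hj₀ : (j₀ : ℕ) = 0) : ‖b‖ ≤ |b j₀| + √(∑ j : NonconstCoord p, b j ^ 2) := by
  have hs : √(∑ j : NonconstCoord p, b j ^ 2) ^ 2 = ∑ j : NonconstCoord p, b j ^ 2 :=
    Real.sq_sqrt (Finset.sum_nonneg fun j _ => sq_nonneg _)
  rw [EuclideanSpace.norm_eq, Real.sqrt_le_left (by positivity)]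
  simp_rw [Real.norm_eq_abs, sq_abs]
  rw [sum_eq_add_sum_nonconstCoord _ hj₀]
  nlinarith [abs_nonneg (b j₀), Real.sqrt_nonneg (∑ j : NonconstCoord p, b j ^ 2), sq_abs (b j₀)]

namespace Condition1

variable {Ω : Type*} [MeasurableSpace Ω] {μ : Measure Ω} {p : ℕ}
  {Xstar : Ω → EuclideanSpace ℝ (Fin p)} {Ystar : Ω → ℝ} {B₁ q : ℝ}

theorem ae_abs_apply_le (h : Condition1 μ Xstar Ystar B₁ q) (j : Fin p) :
    ∀ᵐ ω ∂μ, |Xstar ω j| ≤ max B₁ 1 := by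
  by_cases hj : (j : ℕ) = 0
  · filter_upwards [h.1 j hj] with ω hω
    simp [hω]
  · filter_upwards [(h.2.1 j hj).2.2] with ω hω
    exact hω.trans (le_max_left _ _)

theorem ae_abs_mul_apply_le (h : Condition1 μ Xstar Ystar B₁ q) (b : EuclideanSpace ℝ (Fin p))
    (j : Fin p) : ∀ᵐ ω ∂μ, |b j * Xstar ω j| ≤ ‖b‖ * max B₁ 1 := by
  filter_upwards [h.ae_abs_apply_le j] with ω hω
  rw [abs_mul]
  exact mul_le_mul (PiLp.norm_apply_le b j) hω (abs_nonneg _) (norm_nonneg b)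

theorem ae_abs_inner_le (h : Condition1 μ Xstar Ystar B₁ q) (b : EuclideanSpace ℝ (Fin p)) :
    ∀ᵐ ω ∂μ, |⟪Xstar ω, b⟫| ≤ p * (‖b‖ * max B₁ 1) := by
  simpa [real_inner_eq_sum] using ae_abs_finset_sum_le (h.ae_abs_mul_apply_le b) Finset.univ

theorem ae_inner_eq_add_sum (h : Condition1 μ Xstar Ystar B₁ q) (b : EuclideanSpace ℝ (Fin p))
    {j₀ : Fin p} (hj₀ : (j₀ : ℕ) = 0) :
    ∀ᵐ ω ∂μ, ⟪Xstar ω, b⟫ = b j₀ + ∑ j : NonconstCoord p, b j * Xstar ω j := by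
  filter_upwards [h.1 j₀ hj₀] with ω hω
  rw [real_inner_eq_sum, sum_eq_add_sum_nonconstCoord _ hj₀, hω, mul_one]

theorem integral_mul_apply_eq_zero (h : Condition1 μ Xstar Ystar B₁ q)
    (b : EuclideanSpace ℝ (Fin p)) (j : NonconstCoord p) : ∫ ω, b j * Xstar ω j ∂μ = 0 := by
  rw [integral_const_mul, (h.2.1 j.1 j.2).1, mul_zero]

theorem iIndepFun_mul_apply (h : Condition1 μ Xstar Ystar B₁ q) (b : EuclideanSpace ℝ (Fin p)) :
    iIndepFun (fun (j : NonconstCoord p) ω => b j * Xstar ω j) μ :=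
  h.2.2.1.comp _ fun j => measurable_const_mul (b j)

variable [IsProbabilityMeasure μ]

theorem integral_sq_apply (h : Condition1 μ Xstar Ystar B₁ q) (hX : Measurable Xstar)
    {j : Fin p} (hj : (j : ℕ) ≠ 0) : ∫ ω, Xstar ω j ^ 2 ∂μ = 1 := by
  obtain ⟨hmean, hvar, hbd⟩ := h.2.1 j hj
  have hmem : MemLp (fun ω => Xstar ω j) 2 μ :=
    .of_bound (by fun_prop : Measurable fun ω => Xstar ω j).aestronglyMeasurable B₁ hbd
  have := variance_eq_sub hmem
  rw [hvar, hmean] at this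
  simpa using this.symm

theorem integral_pow_four_apply_le (h : Condition1 μ Xstar Ystar B₁ q) (hX : Measurable Xstar)
    {j : Fin p} (hj : (j : ℕ) ≠ 0) : ∫ ω, Xstar ω j ^ 4 ∂μ ≤ B₁ ^ 2 := by
  have hbd := (h.2.1 j hj).2.2
  have hXj : Measurable fun ω => Xstar ω j := by fun_prop
  calc ∫ ω, Xstar ω j ^ 4 ∂μ ≤ ∫ ω, B₁ ^ 2 * Xstar ω j ^ 2 ∂μ := by
        refine integral_mono_ae (integrable_pow_of_ae_abs_le hXj hbd 4)
          ((integrable_pow_of_ae_abs_le hXj hbd 2).const_mul _) ?_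
        filter_upwards [hbd] with ω hω
        have : Xstar ω j ^ 2 ≤ B₁ ^ 2 := by
          simpa [sq_abs] using pow_le_pow_left₀ (abs_nonneg _) hω 2
        nlinarith [sq_nonneg (Xstar ω j)]
    _ = B₁ ^ 2 := by rw [integral_const_mul, h.integral_sq_apply hX hj, mul_one]

theorem integral_mul_apply_sq (h : Condition1 μ Xstar Ystar B₁ q) (hX : Measurable Xstar)
    (b : EuclideanSpace ℝ (Fin p)) (j : NonconstCoord p) :
    ∫ ω, (b j * Xstar ω j) ^ 2 ∂μ = b j ^ 2 := by
  simp_rw [mul_pow]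
  rw [integral_const_mul, h.integral_sq_apply hX j.2, mul_one]

theorem integral_sum_mul_apply_sq (h : Condition1 μ Xstar Ystar B₁ q) (hX : Measurable Xstar)
    (b : EuclideanSpace ℝ (Fin p)) :
    ∫ ω, (∑ j : NonconstCoord p, b j * Xstar ω j) ^ 2 ∂μ = ∑ j : NonconstCoord p, b j ^ 2 := by
  rw [(h.iIndepFun_mul_apply b).integral_sum_sq (fun j => by fun_prop)
    (fun j => h.ae_abs_mul_apply_le b j.1) (h.integral_mul_apply_eq_zero b)]
  exact Finset.sum_congr rfl fun j _ => h.integral_mul_apply_sq hX b j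

theorem integral_sum_mul_apply_pow_four_le (h : Condition1 μ Xstar Ystar B₁ q)
    (hX : Measurable Xstar) (b : EuclideanSpace ℝ (Fin p)) :
    ∫ ω, (∑ j : NonconstCoord p, b j * Xstar ω j) ^ 4 ∂μ ≤
      (B₁ ^ 2 + 3) * (∑ j : NonconstCoord p, b j ^ 2) ^ 2 := by
  have hT4 (j : NonconstCoord p) : ∫ ω, (b j * Xstar ω j) ^ 4 ∂μ ≤ B₁ ^ 2 * (b j ^ 2) ^ 2 := by
    simp_rw [mul_pow]
    rw [integral_const_mul]
    nlinarith [h.integral_pow_four_apply_le hX j.2, pow_nonneg (sq_nonneg (b j)) 2]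
  calc ∫ ω, (∑ j : NonconstCoord p, b j * Xstar ω j) ^ 4 ∂μ
      ≤ ∑ j : NonconstCoord p, ∫ ω, (b j * Xstar ω j) ^ 4 ∂μ
        + 3 * (∑ j : NonconstCoord p, ∫ ω, (b j * Xstar ω j) ^ 2 ∂μ) ^ 2 :=
        (h.iIndepFun_mul_apply b).integral_sum_pow_four_le (fun j => by fun_prop)
          (fun j => h.ae_abs_mul_apply_le b j.1) (h.integral_mul_apply_eq_zero b) _
    _ ≤ B₁ ^ 2 * ∑ j : NonconstCoord p, (b j ^ 2) ^ 2
          + 3 * (∑ j : NonconstCoord p, b j ^ 2) ^ 2 := by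
        rw [Finset.mul_sum, Finset.sum_congr rfl fun j _ => h.integral_mul_apply_sq hX b j]
        exact add_le_add_left (Finset.sum_le_sum fun j _ => hT4 j) _
    _ ≤ (B₁ ^ 2 + 3) * (∑ j : NonconstCoord p, b j ^ 2) ^ 2 := by
        have := Finset.sum_sq_le_sq_sum_of_nonneg (s := Finset.univ)
          fun (j : NonconstCoord p) _ => sq_nonneg (b j)
        nlinarith [sq_nonneg B₁]

theorem sqrt_sum_sq_le_mul_integral_abs (h : Condition1 μ Xstar Ystar B₁ q)
    (hX : Measurable Xstar) (b : EuclideanSpace ℝ (Fin p)) :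
    √(∑ j : NonconstCoord p, b j ^ 2) ≤
      √(B₁ ^ 2 + 3) * ∫ ω, |∑ j : NonconstCoord p, b j * Xstar ω j| ∂μ := by
  have hbd := ae_abs_finset_sum_le (fun j : NonconstCoord p => h.ae_abs_mul_apply_le b j.1)
    Finset.univ
  have hS : Measurable fun ω => ∑ j : NonconstCoord p, b j * Xstar ω j := by fun_prop
  rw [← h.integral_sum_mul_apply_sq hX b]
  refine sqrt_integral_sq_le_of_integral_pow_four_le
    (by simpa using (integrable_pow_of_ae_abs_le hS hbd 1).abs)
    (integrable_pow_of_ae_abs_le hS hbd 2) (integrable_pow_of_ae_abs_le hS hbd 4)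
    (by positivity) ?_
  rw [h.integral_sum_mul_apply_sq hX b]
  exact h.integral_sum_mul_apply_pow_four_le hX b

theorem norm_le_integral_abs_inner (h : Condition1 μ Xstar Ystar B₁ q) (hX : Measurable Xstar)
    (b : EuclideanSpace ℝ (Fin p)) :
    ‖b‖ ≤ 4 * √(B₁ ^ 2 + 3) * ∫ ω, |⟪Xstar ω, b⟫| ∂μ := by
  rcases Nat.eq_zero_or_pos p with rfl | hp
  · simp [Subsingleton.elim b 0]
  set j₀ : Fin p := ⟨0, hp⟩
  set S := fun ω => ∑ j : NonconstCoord p, b j * Xstar ω j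
  set A := ∫ ω, |⟪Xstar ω, b⟫| ∂μ
  have hinner := h.ae_inner_eq_add_sum b (rfl : (j₀ : ℕ) = 0)
  have hT (j : NonconstCoord p) := h.ae_abs_mul_apply_le b j.1
  have hSint : Integrable S μ :=
    .of_bound (by fun_prop) _ (ae_abs_finset_sum_le hT Finset.univ)
  have hSmean : ∫ ω, S ω ∂μ = 0 :=
    integral_finset_sum_eq_zero (fun j => by fun_prop) hT (h.integral_mul_apply_eq_zero b) _
  have hint : Integrable (fun ω => |⟪Xstar ω, b⟫|) μ :=
    (Integrable.of_bound (by fun_prop) _ (h.ae_abs_inner_le b)).abs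
  have hb₀ : |b j₀| ≤ A := by
    have : ∫ ω, ⟪Xstar ω, b⟫ ∂μ = b j₀ := by
      rw [integral_congr_ae hinner, integral_add (integrable_const _) hSint, hSmean]
      simp
    exact this ▸ abs_integral_le_integral_abs
  have hS : ∫ ω, |S ω| ∂μ ≤ 2 * A := by
    have : ∫ ω, |S ω| ∂μ ≤ ∫ ω, (|⟪Xstar ω, b⟫| + |b j₀|) ∂μ := by
      refine integral_mono_ae hSint.abs (hint.add (integrable_const _)) ?_
      filter_upwards [hinner] with ω hω
      rw [hω]
      simpa using abs_sub (b j₀ + S ω) (b j₀)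
    rw [integral_add hint (integrable_const _)] at this
    simp only [integral_const, probReal_univ, smul_eq_mul, one_mul] at this
    linarith
  have hr : 1 ≤ √(B₁ ^ 2 + 3) := Real.one_le_sqrt.2 (by nlinarith)
  have hA : 0 ≤ A := integral_nonneg fun ω => abs_nonneg _
  calc ‖b‖ ≤ |b j₀| + √(∑ j : NonconstCoord p, b j ^ 2) := norm_le_abs_add_sqrt_sum_sq b rfl
    _ ≤ A + √(B₁ ^ 2 + 3) * (2 * A) := add_le_add hb₀
        ((h.sqrt_sum_sq_le_mul_integral_abs hX b).trans
          (mul_le_mul_of_nonneg_left hS (by positivity)))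
    _ ≤ 4 * √(B₁ ^ 2 + 3) * A := by nlinarith

theorem mul_integral_abs_inner_le (h : Condition1 μ Xstar Ystar B₁ q) (hX : Measurable Xstar)
    (hY : Measurable Ystar) (b : EuclideanSpace ℝ (Fin p)) :
    q * ∫ ω, |⟪Xstar ω, b⟫| ∂μ ≤ -∫ ω, (Ystar ω * ⟪Xstar ω, b⟫ - rho ⟪Xstar ω, b⟫) ∂μ := by
  have htb := h.ae_abs_inner_le b
  obtain ⟨-, -, -, hY01, hW⟩ := h
  set I : Ω → ℝ := fun ω => if Ystar ω = 1 then 1 else 0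
  set W := μ[I | MeasurableSpace.comap Xstar inferInstance]
  set t := fun ω => ⟪Xstar ω, b⟫
  have ht : Measurable t := by fun_prop
  have htm : StronglyMeasurable[MeasurableSpace.comap Xstar inferInstance] t :=
    ((comap_measurable Xstar).inner measurable_const).stronglyMeasurable
  have hI : Integrable I μ := .of_bound (Measurable.ite (hY (measurableSet_singleton 1))
      measurable_const measurable_const).aestronglyMeasurable
    1 (.of_forall fun ω => by by_cases h1 : Ystar ω = 1 <;> simp [I, h1])
  have hYI : Ystar =ᵐ[μ] I := by
    filter_upwards [hY01] with ω hω
    rcases hω with h0 | h1 <;> simp [I, *]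
  have htI : Integrable (t * I) μ := hI.bdd_mul ht.aestronglyMeasurable htb
  have htW : Integrable (fun ω => t ω * W ω) μ :=
    integrable_condExp.bdd_mul ht.aestronglyMeasurable htb
  have hρ : Integrable (fun ω => rho (t ω)) μ := .of_bound
    (continuous_rho.measurable.comp ht).aestronglyMeasurable _ (htb.mono fun ω hω => by
      rw [Real.norm_eq_abs, abs_of_nonneg (rho_nonneg _)]
      exact rho_mono ((le_abs_self _).trans hω))
  have hYt : Integrable (fun ω => Ystar ω * t ω) μ :=
    htI.congr (hYI.mono fun ω hω => by simp [hω, mul_comm])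
  have hYW : ∫ ω, Ystar ω * t ω ∂μ = ∫ ω, t ω * W ω ∂μ := by
    rw [integral_mul_condExp hX.comap_le htm htI hI]
    exact integral_congr_ae (hYI.mono fun ω hω => by simp [hω, mul_comm])
  calc q * ∫ ω, |t ω| ∂μ = ∫ ω, q * |t ω| ∂μ := (integral_const_mul _ _).symm
    _ ≤ ∫ ω, (rho (t ω) - t ω * W ω) ∂μ := by
      refine integral_mono_ae
        ((Integrable.of_bound ht.aestronglyMeasurable _ htb).abs.const_mul q) (hρ.sub htW) ?_
      filter_upwards [hW] with ω hω
      rw [mul_comm (t ω)]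
      exact mul_abs_le_rho_sub_mul hω.1 hω.2 _
    _ = -∫ ω, (Ystar ω * t ω - rho (t ω)) ∂μ := by
      rw [integral_sub hρ htW, integral_sub hYt hρ, hYW]
      ring

end Condition1

section Objective

variable {Ω : Type*} [MeasurableSpace Ω] (μ : Measure Ω) {n p : ℕ} (τ : ℝ)
  (X : Fin n → EuclideanSpace ℝ (Fin p)) (Xstar : Ω → EuclideanSpace ℝ (Fin p)) (Ystar : Ω → ℝ)

theorem popObj_zero [IsProbabilityMeasure μ] (Y : Fin n → ℝ) :
    popObj μ τ X Y Xstar Ystar 0 = -((n + τ) * Real.log 2) := by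
  simp only [popObj, inner_zero_right, mul_zero, rho_zero, zero_sub, Finset.sum_neg_distrib,
    Finset.sum_const, Finset.card_univ, Fintype.card_fin, nsmul_eq_mul, integral_const,
    probReal_univ, smul_eq_mul, mul_neg, one_mul]
  ring

theorem popObj_le_mul_integral {Y : Fin n → ℝ} (hY : ∀ i, Y i = 0 ∨ Y i = 1)
    (β : EuclideanSpace ℝ (Fin p)) :
    popObj μ τ X Y Xstar Ystar β ≤
      τ * ∫ ω, (Ystar ω * ⟪Xstar ω, β⟫ - rho ⟪Xstar ω, β⟫) ∂μ := by
  have : ∑ i, (Y i * ⟪X i, β⟫ - rho ⟪X i, β⟫) ≤ 0 :=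
    Finset.sum_nonpos fun i _ => mul_sub_rho_nonpos (hY i) _
  rw [popObj]
  linarith

end Objective

theorem stmt12_general (B₁ q : ℝ) (hq0 : 0 < q) :
    ∃ η₀ ν : ℝ, 0 < η₀ ∧ 0 < ν ∧
      ∀ (Ω : Type u) (_ : MeasurableSpace Ω) (μ : Measure Ω),
        IsProbabilityMeasure μ →
      ∀ (n p : ℕ) (τ cstar ostar : ℝ)
        (X : Fin n → EuclideanSpace ℝ (Fin p)) (Y : Fin n → ℝ)
        (Xstar : Ω → EuclideanSpace ℝ (Fin p)) (Ystar : Ω → ℝ),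
        (∀ i, Y i = 0 ∨ Y i = 1) →
        0 < cstar → 0 < ostar → cstar * p ≤ τ → ostar * n < p →
        Measurable Xstar → Measurable Ystar →
        Condition1 μ Xstar Ystar B₁ q →
        ∀ b : EuclideanSpace ℝ (Fin p),
          (∀ β : EuclideanSpace ℝ (Fin p),
            popObj μ τ X Y Xstar Ystar β ≤ popObj μ τ X Y Xstar Ystar b) →
          ‖b‖ ≤ (1 + 1 / (cstar * ostar)) * Real.log 2 / (η₀ * ν) := by
  set r := √(B₁ ^ 2 + 3)
  refine ⟨q, 1 / (4 * r), hq0, by positivity, ?_⟩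
  intro Ω _ μ _ n p τ cstar ostar X Y Xstar Ystar hY hcstar hostar hτ hnp hX hYm h b hb
  have hp : (0 : ℝ) < p := (by positivity : (0 : ℝ) ≤ ostar * n).trans_lt hnp
  have hτ0 : 0 < τ := (mul_pos hcstar hp).trans_le hτ
  have hnτ : n + τ ≤ (1 + 1 / (cstar * ostar)) * τ := by
    have : (n : ℝ) ≤ τ / (cstar * ostar) := by rw [le_div_iff₀ (by positivity)]; nlinarith
    rw [add_mul, one_mul, one_div, inv_mul_eq_div]
    linarith
  have hobj := popObj_zero μ τ X Xstar Ystar Y ▸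
    (hb 0).trans (popObj_le_mul_integral μ τ X Xstar Ystar hY b)
  have hnorm := h.norm_le_integral_abs_inner hX b
  have hcond := h.mul_integral_abs_inner_le hX hYm b
  have hlog : 0 < Real.log 2 := Real.log_pos one_lt_two
  rw [le_div_iff₀ (by positivity)]
  calc ‖b‖ * (q * (1 / (4 * r))) ≤ q * ∫ ω, |⟪Xstar ω, b⟫| ∂μ := by
        rw [mul_one_div, ← mul_div_assoc, mul_comm, div_le_iff₀ (by positivity)]
        nlinarith
    _ ≤ (n + τ) * Real.log 2 / τ := by rw [le_div_iff₀ hτ0]; nlinarith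
    _ ≤ (1 + 1 / (cstar * ostar)) * Real.log 2 := by rw [div_le_iff₀ hτ0]; nlinarith

/-- **Boundedness of the population-catalytic-prior MAP estimator in the linear
asymptotic regime** (Theorem 4(ii) of the paper).  Under Condition 1 on the
synthetic data-generating distribution with constants `B₁, q`, Condition 5
(`τ ≥ c⋆ p`), and `p > ω⋆ n` (so that `(n + τ)/τ ≤ C⋆ := 1 + 1/(c⋆ω⋆)`), there
exist positive constants `η₀, ν` depending only on `B₁` and `q` such that every
maximizer `β̂_∞` of the population objective satisfies
`‖β̂_∞‖ ≤ C⋆ log 2/(η₀ν)`. -/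
theorem stmt12 (B₁ q : ℝ) (hB : 0 < B₁) (hq0 : 0 < q) (hq1 : q < 1) :
    ∃ η₀ ν : ℝ, 0 < η₀ ∧ 0 < ν ∧
      ∀ (Ω : Type u) (_ : MeasurableSpace Ω) (μ : Measure Ω),
        IsProbabilityMeasure μ →
      ∀ (n p : ℕ) (τ cstar ostar : ℝ)
        (X : Fin n → EuclideanSpace ℝ (Fin p)) (Y : Fin n → ℝ)
        (Xstar : Ω → EuclideanSpace ℝ (Fin p)) (Ystar : Ω → ℝ),
        (∀ i, Y i = 0 ∨ Y i = 1) →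
        0 < cstar → 0 < ostar → cstar * p ≤ τ → ostar * n < p →
        Measurable Xstar → Measurable Ystar →
        Condition1 μ Xstar Ystar B₁ q →
        ∀ b : EuclideanSpace ℝ (Fin p),
          (∀ β : EuclideanSpace ℝ (Fin p),
            popObj μ τ X Y Xstar Ystar β ≤ popObj μ τ X Y Xstar Ystar b) →
          ‖b‖ ≤ (1 + 1 / (cstar * ostar)) * Real.log 2 / (η₀ * ν) :=
  stmt12_general B₁ q hq0
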